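/- For $1<\alpha<2$ and any $\theta \in \mathbb{R}$, the coefficients $q_{-1}=1$, $q_0 = 2^{3-\alpha}-4$, $q_1 = 3^{3-\alpha} - 4\cdot 2^{3-\alpha}+6$ and $q_m$ (fourth differences of $x^{3-\alpha}$, for $m\geq 2$) satisfy $\sum_{m=-1}^{\infty} q_m \cos(m\theta) \leq 0$. -/

import Mathlib

/-- `Q n` is the coefficient `q_{n-1}`, indexed so that `Q 0 = q_{-1}`. -/
noncomputable def Q (α : ℝ) : ℕ → ℝ
  | 0 => 1
  | 1 => (2 : ℝ) ^ (3 - α) - 4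
  | 2 => (3 : ℝ) ^ (3 - α) - 4 * (2 : ℝ) ^ (3 - α) + 6
  | (n + 3) =>
      (((n : ℝ) + 2) + 2) ^ (3 - α) - 4 * (((n : ℝ) + 2) + 1) ^ (3 - α)
        + 6 * ((n : ℝ) + 2) ^ (3 - α) - 4 * (((n : ℝ) + 2) - 1) ^ (3 - α)
        + (((n : ℝ) + 2) - 2) ^ (3 - α)

/-!
Write `s = 3 - α ∈ (1, 2)` and `f x = x ^ s`. The coefficients `q_m`, `m ≥ 2`, are the fourth
forward differences `Δ⁴ f (m - 2)`, and the partial sums of `∑ q_m` telescope to `Δ³ f N`.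
Because `f' = s x ^ (s - 1)` is concave and `f'' = s (s - 1) x ^ (s - 2)` is convex on `(0, ∞)`,
the second difference `Δ² f` is antitone and convex on `[0, ∞)`: the partial sums `Δ³ f N` are
`≤ 0` and `q_m = Δ² (Δ² f) (m - 2) ≥ 0`, so the series converges. Finally `q_{-1} + q_1 ≥ 0`
(this is where `3 ^ 9 ≤ 2 ^ 16` enters), so replacing every cosine by `1` can only increase a
partial sum of the cosine series, which is therefore bounded by a partial sum of `∑ q_m ≤ 0`.
-/

open Set Real fwdDiff

section FiniteDifferences

variable {f f' f'' : ℝ → ℝ} {h a : ℝ}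

lemma ConvexOn.fwdDiff_iter_two_nonneg {S : Set ℝ} (hf : ConvexOn ℝ S f) {x : ℝ} (hx : x ∈ S)
    (hx' : x + 2 * h ∈ S) : 0 ≤ Δ_[h] ^[2] f x := by
  have hmid := hf.2 hx hx' (by norm_num : (0 : ℝ) ≤ 1 / 2) (by norm_num : (0 : ℝ) ≤ 1 / 2)
    (by norm_num)
  rw [smul_eq_mul, smul_eq_mul, smul_eq_mul, smul_eq_mul,
    show 1 / 2 * x + 1 / 2 * (x + 2 * h) = x + h by ring] at hmid
  simp only [Function.iterate_succ_apply', Function.iterate_zero_apply, fwdDiff,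
    show x + h + h = x + 2 * h by ring]
  linarith

lemma ConcaveOn.fwdDiff_iter_two_nonpos {S : Set ℝ} (hf : ConcaveOn ℝ S f) {x : ℝ} (hx : x ∈ S)
    (hx' : x + 2 * h ∈ S) : Δ_[h] ^[2] f x ≤ 0 := by
  have := hf.neg.fwdDiff_iter_two_nonneg hx hx'
  simp only [Function.iterate_succ_apply', Function.iterate_zero_apply, fwdDiff, Pi.neg_apply] at *
  linarith

lemma HasDerivAt.fwdDiff {𝕜 F : Type*} [NontriviallyNormedField 𝕜] [NormedAddCommGroup F]
    [NormedSpace 𝕜 F] {f f' : 𝕜 → F} {h x : 𝕜} (hx : HasDerivAt f (f' x) x)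
    (hxh : HasDerivAt f (f' (x + h)) (x + h)) : HasDerivAt (Δ_[h] f) (Δ_[h] f' x) x :=
  (hxh.comp_add_const x h).sub hx

lemma hasDerivAt_fwdDiff_iter {𝕜 F : Type*} [NontriviallyNormedField 𝕜] [NormedAddCommGroup F]
    [NormedSpace 𝕜 F] {f f' : 𝕜 → F} {h : 𝕜} {S : Set 𝕜} (hS : ∀ x ∈ S, x + h ∈ S)
    (hf : ∀ x ∈ S, HasDerivAt f (f' x) x) (n : ℕ) :
    ∀ x ∈ S, HasDerivAt (Δ_[h] ^[n] f) (Δ_[h] ^[n] f' x) x := by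
  induction n with
  | zero => exact hf
  | succ n ih =>
    intro x hx
    rw [Function.iterate_succ_apply', Function.iterate_succ_apply']
    exact (ih x hx).fwdDiff (ih _ (hS x hx))

lemma antitoneOn_fwdDiff_iter_two (hh : 0 ≤ h) (hf : ∀ x ∈ Ici a, HasDerivAt f (f' x) x)
    (hf' : ConcaveOn ℝ (Ioi a) f') : AntitoneOn (Δ_[h] ^[2] f) (Ici a) := by
  have hd := hasDerivAt_fwdDiff_iter (S := Ici a)
    (fun x (hx : a ≤ x) => show a ≤ x + h by linarith) hf 2
  refine antitoneOn_of_hasDerivWithinAt_nonpos (convex_Ici a)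
    (fun x hx => (hd x hx).continuousAt.continuousWithinAt)
    (fun x hx => (hd x (interior_subset hx)).hasDerivWithinAt) fun x hx => ?_
  rw [interior_Ici] at hx
  exact hf'.fwdDiff_iter_two_nonpos hx (show a < x + 2 * h by rw [mem_Ioi] at hx; linarith)

lemma convexOn_fwdDiff_iter_two (hh : 0 ≤ h) (hf : ∀ x ∈ Ici a, HasDerivAt f (f' x) x)
    (hf' : ∀ x ∈ Ioi a, HasDerivAt f' (f'' x) x) (hf'' : ConvexOn ℝ (Ioi a) f'') :
    ConvexOn ℝ (Ici a) (Δ_[h] ^[2] f) := by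
  have hd := hasDerivAt_fwdDiff_iter (S := Ici a)
    (fun x (hx : a ≤ x) => show a ≤ x + h by linarith) hf 2
  have hd' := hasDerivAt_fwdDiff_iter (S := Ioi a)
    (fun x (hx : a < x) => show a < x + h by linarith) hf' 2
  refine convexOn_of_hasDerivWithinAt2_nonneg (convex_Ici a) (f'' := Δ_[h] ^[2] f'')
    (fun x hx => (hd x hx).continuousAt.continuousWithinAt)
    (fun x hx => (hd x (interior_subset hx)).hasDerivWithinAt) ?_ fun x hx => ?_ <;>
    rw [interior_Ici] at *
  · exact fun x hx => (hd' x hx).hasDerivWithinAt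
  · exact hf''.fwdDiff_iter_two_nonneg hx (show a < x + 2 * h by rw [mem_Ioi] at hx; linarith)

end FiniteDifferences

lemma Real.convexOn_rpow_of_nonpos {q : ℝ} (hq : q ≤ 0) :
    ConvexOn ℝ (Ioi 0) fun x : ℝ => x ^ q := by
  refine convexOn_of_hasDerivWithinAt2_nonneg (convex_Ioi 0) (f' := fun x => q * x ^ (q - 1))
    (f'' := fun x => q * ((q - 1) * x ^ (q - 1 - 1)))
    (fun x hx => (continuousAt_rpow_const x q (Or.inl (ne_of_gt hx))).continuousWithinAt)
    ?_ ?_ ?_ <;> rw [interior_Ioi] <;> intro x (hx : 0 < x)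
  · exact (hasDerivAt_rpow_const (Or.inl hx.ne')).hasDerivWithinAt
  · exact ((hasDerivAt_rpow_const (Or.inl hx.ne')).const_mul q).hasDerivWithinAt
  · rw [← mul_assoc]
    exact mul_nonneg (mul_nonneg_of_nonpos_of_nonpos hq (by linarith)) (rpow_nonneg hx.le _)

section RpowDifferences

variable {s h : ℝ}

lemma antitoneOn_fwdDiff_iter_two_rpow (hs₁ : 1 ≤ s) (hs₂ : s ≤ 2) (hh : 0 ≤ h) :
    AntitoneOn (Δ_[h] ^[2] fun x : ℝ => x ^ s) (Ici 0) := by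
  refine antitoneOn_fwdDiff_iter_two hh (fun x _ => hasDerivAt_rpow_const (Or.inr hs₁)) ?_
  exact ((concaveOn_rpow (p := s - 1) (by linarith) (by linarith)).subset Ioi_subset_Ici_self
    (convex_Ioi 0)).smul (by linarith : 0 ≤ s)

lemma convexOn_fwdDiff_iter_two_rpow (hs₁ : 1 ≤ s) (hs₂ : s ≤ 2) (hh : 0 ≤ h) :
    ConvexOn ℝ (Ici 0) (Δ_[h] ^[2] fun x : ℝ => x ^ s) := by
  refine convexOn_fwdDiff_iter_two hh (fun x _ => hasDerivAt_rpow_const (Or.inr hs₁))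
    (fun x (hx : 0 < x) => ((hasDerivAt_rpow_const (Or.inl hx.ne')).const_mul s)) ?_
  exact ((convexOn_rpow_of_nonpos (q := s - 1 - 1) (by linarith)).smul
    (by linarith : 0 ≤ s - 1)).smul (by linarith : 0 ≤ s)

end RpowDifferences

lemma antitoneOn_three_rpow_sub_four_mul_two_rpow :
    AntitoneOn (fun s : ℝ => (3 : ℝ) ^ s - 4 * (2 : ℝ) ^ s) (Iic 2) := by
  have hd : ∀ s : ℝ, HasDerivAt (fun s : ℝ => (3 : ℝ) ^ s - 4 * (2 : ℝ) ^ s)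
      (3 ^ s * log 3 - 4 * (2 ^ s * log 2)) s := fun s =>
    (hasStrictDerivAt_const_rpow (by norm_num) s).hasDerivAt.sub
      ((hasStrictDerivAt_const_rpow (by norm_num) s).hasDerivAt.const_mul 4)
  refine antitoneOn_of_hasDerivWithinAt_nonpos (convex_Iic 2)
    (fun s _ => (hd s).continuousAt.continuousWithinAt) (fun s _ => (hd s).hasDerivWithinAt)
    fun s hs => ?_
  rw [interior_Iic] at hs
  have hlog : 9 * log 3 ≤ 16 * log 2 := by
    have := log_le_log (by norm_num) (by norm_num : (3 : ℝ) ^ 9 ≤ 2 ^ 16)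
    rwa [log_pow, log_pow, Nat.cast_ofNat, Nat.cast_ofNat] at this
  have hratio : (3 / 2 : ℝ) ^ s ≤ 9 / 4 := by
    calc (3 / 2 : ℝ) ^ s ≤ (3 / 2) ^ (2 : ℝ) := rpow_le_rpow_of_exponent_le (by norm_num) hs.le
      _ = 9 / 4 := by norm_num [rpow_two]
  have h3 : (3 : ℝ) ^ s = 2 ^ s * (3 / 2) ^ s := by
    rw [← mul_rpow (by norm_num) (by norm_num)]; norm_num
  have hlog3 := mul_le_mul_of_nonneg_right hratio (log_nonneg (by norm_num : (1 : ℝ) ≤ 3))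
  rw [h3, show 2 ^ s * (3 / 2) ^ s * log 3 - 4 * (2 ^ s * log 2)
    = 2 ^ s * ((3 / 2) ^ s * log 3 - 4 * log 2) by ring]
  exact mul_nonpos_of_nonneg_of_nonpos (rpow_nonneg (by norm_num) s) (by linarith)

lemma sum_range_add_three {M : Type*} [AddCommMonoid M] (g : ℕ → M) (N : ℕ) :
    ∑ i ∈ Finset.range (N + 3), g i = g 0 + g 1 + g 2 + ∑ i ∈ Finset.range N, g (i + 3) := by
  simp [add_comm N 3, Finset.sum_range_add, Finset.sum_range_succ, add_comm _ 3]

section Coefficients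

variable {α : ℝ}

lemma Q_add_three (n : ℕ) : Q α (n + 3) = Δ_[1] ^[4] (fun x : ℝ => x ^ (3 - α)) n := by
  simp only [Q, Function.iterate_succ_apply', Function.iterate_zero_apply, fwdDiff]
  ring_nf

lemma sum_range_Q_eq_fwdDiff_iter_three (hα : α ≠ 3) (N : ℕ) :
    ∑ i ∈ Finset.range (N + 3), Q α i = Δ_[1] ^[3] (fun x : ℝ => x ^ (3 - α)) N := by
  induction N with
  | zero =>
    simp only [Finset.sum_range_succ, Finset.sum_range_zero, Q, Function.iterate_succ_apply',
      Function.iterate_zero_apply, fwdDiff, Nat.cast_zero, zero_rpow (sub_ne_zero.2 hα.symm),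
      zero_add, one_rpow, show (1 : ℝ) + 1 = 2 by norm_num, show (2 : ℝ) + 1 = 3 by norm_num]
    ring
  | succ N ih =>
    rw [show N + 1 + 3 = N + 3 + 1 by ring, Finset.sum_range_succ, ih, Q_add_three,
      Function.iterate_succ_apply' _ 3, fwdDiff, Nat.cast_succ]
    ring

variable (hα₁ : 1 ≤ α) (hα₂ : α ≤ 2)
include hα₁ hα₂

lemma Q_add_three_nonneg (n : ℕ) : 0 ≤ Q α (n + 3) := by
  rw [Q_add_three, show 4 = 2 + 2 from rfl, Function.iterate_add_apply]
  exact (convexOn_fwdDiff_iter_two_rpow (by linarith) (by linarith) zero_le_one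
    ).fwdDiff_iter_two_nonneg (mem_Ici.2 (Nat.cast_nonneg n)) (by rw [mem_Ici]; positivity)

lemma sum_range_Q_nonpos (N : ℕ) : ∑ i ∈ Finset.range (N + 3), Q α i ≤ 0 := by
  rw [sum_range_Q_eq_fwdDiff_iter_three (by linarith), Function.iterate_succ_apply', fwdDiff,
    sub_nonpos]
  exact antitoneOn_fwdDiff_iter_two_rpow (by linarith) (by linarith) zero_le_one
    (mem_Ici.2 (Nat.cast_nonneg N)) (by rw [mem_Ici]; positivity) (by linarith)

omit hα₂ in
lemma Q_zero_add_Q_two_nonneg : 0 ≤ Q α 0 + Q α 2 := by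
  have := antitoneOn_three_rpow_sub_four_mul_two_rpow (show 3 - α ≤ 2 by linarith)
    (mem_Iic.2 le_rfl) (by linarith)
  norm_num [Q, rpow_two] at this ⊢
  linarith

lemma summable_Q : Summable (Q α) := by
  refine (summable_nat_add_iff 3).1 <|
    summable_of_sum_range_le (c := -(Q α 0 + Q α 1 + Q α 2)) (Q_add_three_nonneg hα₁ hα₂)
      fun N => ?_
  have := sum_range_Q_nonpos hα₁ hα₂ N
  rw [sum_range_add_three] at this
  linarith

lemma sum_range_Q_mul_cos_le (θ : ℝ) (N : ℕ) :
    ∑ n ∈ Finset.range (N + 3), Q α n * cos ((n - 1) * θ) ≤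
      ∑ n ∈ Finset.range (N + 3), Q α n := by
  rw [sum_range_add_three, sum_range_add_three]
  refine add_le_add ?_ <| Finset.sum_le_sum fun i _ =>
    mul_le_of_le_one_right (Q_add_three_nonneg hα₁ hα₂ i) (cos_le_one _)
  have := mul_le_mul_of_nonneg_left (cos_le_one θ) (Q_zero_add_Q_two_nonneg hα₁)
  norm_num [cos_neg]
  linarith

end Coefficients

theorem cos_weighted_sum_nonpos (α : ℝ) (h1 : 1 < α) (h2 : α < 2) (θ : ℝ) :
    (∑' n : ℕ, Q α n * Real.cos (((n : ℝ) - 1) * θ)) ≤ 0 := by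
  have hsum : Summable fun n : ℕ => Q α n * Real.cos (((n : ℝ) - 1) * θ) :=
    (summable_Q h1.le h2.le).abs.of_norm_bounded fun n => by
      rw [norm_mul, norm_eq_abs, norm_eq_abs]
      exact mul_le_of_le_one_right (abs_nonneg _) (abs_cos_le_one _)
  refine le_of_tendsto' (hsum.hasSum.tendsto_sum_nat.comp (Filter.tendsto_add_atTop_nat 3))
    fun N => ?_
  exact (sum_range_Q_mul_cos_le h1.le h2.le θ N).trans (sum_range_Q_nonpos h1.le h2.le N)
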